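/- arXiv:2107.08557 — 6 statements merged into one kernel-verified Lean document; each statement's English description precedes it below -/
import Mathlib

section
/- Let L be a Banach space, ω ∈ L, and for each i = 1,…,n let τ ↦ L_i(τ) be a continuously differentiable map from ℝ to the bounded operators on L such that L_i(τ)ω is constant in τ (i.e. (d/dτ)(L_i(τ)ω) = 0) and sup_τ ‖L_i(τ)‖ < ∞. Assume there is an integrable function c : ℝ → [0,∞) with ‖[L_i'(τ), L_j(τ)]‖ ≤ c(τ) for all i, j and all τ ≤ 0. Then the vector Λ(τ) = L_1(τ) L_2(τ) ⋯ L_n(τ) ω converges in L as τ → −∞. -/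
/-!
Since `L_i(τ) ω` does not depend on `τ`, the derivative `L_i'(τ)` kills `ω`. Hence, when the
product rule is applied to `Λ(τ)`, each term `L_1 ⋯ L_i' ⋯ L_n ω` is, after commuting `L_i'`
to the right through `L_{i+1} ⋯ L_n`, a sum of at most `n` commutator terms, and so
`‖Λ'(τ)‖ ≤ K c(τ)` for `τ ≤ 0`. An integrable derivative on `(-∞, 0]` forces convergence at `-∞`.
-/

open Filter MeasureTheory Set Topology

section ListProd

variable {E ι : Type*} [NormedAddCommGroup E] [NormedSpace ℝ E]

theorem norm_list_prod_apply_le {B : ι → E →L[ℝ] E} {M : ℝ} (hB : ∀ j, ‖B j‖ ≤ M)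
    (l : List ι) (v : E) : ‖(l.map B).prod v‖ ≤ M ^ l.length * ‖v‖ := by
  induction l with
  | nil => simp
  | cons j s ih =>
    have hM : 0 ≤ M := (norm_nonneg _).trans (hB j)
    calc ‖B j ((s.map B).prod v)‖ ≤ M * ‖(s.map B).prod v‖ := (B j).le_of_opNorm_le (hB j) _
      _ ≤ M * (M ^ s.length * ‖v‖) := by gcongr
      _ = M ^ (j :: s).length * ‖v‖ := by rw [List.length_cons, pow_succ]; ring

theorem norm_apply_list_prod_apply_le_of_norm_commutator_le {B : ι → E →L[ℝ] E}
    {D : E →L[ℝ] E} {ω : E} {M c : ℝ} (hM : 1 ≤ M) (hB : ∀ j, ‖B j‖ ≤ M) (hDω : D ω = 0)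
    (hDB : ∀ j, ‖D * B j - B j * D‖ ≤ c) (l : List ι) :
    ‖D ((l.map B).prod ω)‖ ≤ l.length * M ^ l.length * c * ‖ω‖ := by
  induction l with
  | nil => simp [hDω]
  | cons j s ih =>
    set v := (s.map B).prod ω
    have hc : 0 ≤ c := (norm_nonneg _).trans (hDB j)
    have hsplit : D (B j v) = (D * B j - B j * D) v + B j (D v) := by simp
    have hX : 0 ≤ M ^ s.length * c * ‖ω‖ := by positivity
    calc ‖D (B j v)‖ ≤ c * ‖v‖ + M * ‖D v‖ := by
          rw [hsplit]
          exact (norm_add_le _ _).trans <| add_le_add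
            ((D * B j - B j * D).le_of_opNorm_le (hDB j) v) ((B j).le_of_opNorm_le (hB j) _)
      _ ≤ c * (M ^ s.length * ‖ω‖) + M * (s.length * M ^ s.length * c * ‖ω‖) := by
          gcongr
          exact norm_list_prod_apply_le hB s ω
      _ ≤ (j :: s).length * M ^ (j :: s).length * c * ‖ω‖ := by
          rw [List.length_cons, pow_succ M]
          push_cast
          nlinarith

theorem exists_hasDerivAt_list_prod_apply_norm_le {A : ι → ℝ → E →L[ℝ] E}
    {A' : ι → E →L[ℝ] E} {ω : E} {τ M c : ℝ} (hM : 1 ≤ M) (hA : ∀ i, HasDerivAt (A i) (A' i) τ)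
    (hA'ω : ∀ i, A' i ω = 0) (hAM : ∀ i, ‖A i τ‖ ≤ M)
    (hcomm : ∀ i j, ‖A' i * A j τ - A j τ * A' i‖ ≤ c) (l : List ι) :
    ∃ D : E, HasDerivAt (fun s ↦ (l.map (A · s)).prod ω) D τ ∧
      ‖D‖ ≤ l.length ^ 2 * M ^ l.length * c * ‖ω‖ := by
  induction l with
  | nil => exact ⟨0, by simpa using hasDerivAt_const τ ω, by simp⟩
  | cons i t ih =>
    obtain ⟨D, hD, hDle⟩ := ih
    set v := (t.map (A · τ)).prod ω
    have hc : 0 ≤ c := (norm_nonneg _).trans (hcomm i i)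
    have hX : 0 ≤ M ^ t.length * c * ‖ω‖ := by positivity
    refine ⟨A' i v + A i τ D, by simpa using (hA i).clm_apply hD, ?_⟩
    calc ‖A' i v + A i τ D‖ ≤ ‖A' i v‖ + M * ‖D‖ :=
          (norm_add_le _ _).trans (add_le_add le_rfl ((A i τ).le_of_opNorm_le (hAM i) D))
      _ ≤ t.length * M ^ t.length * c * ‖ω‖ + M * (t.length ^ 2 * M ^ t.length * c * ‖ω‖) := by
          gcongr
          exact norm_apply_list_prod_apply_le_of_norm_commutator_le hM hAM (hA'ω i) (hcomm i) t
      _ ≤ (i :: t).length ^ 2 * M ^ (i :: t).length * c * ‖ω‖ := by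
          rw [List.length_cons, pow_succ M]
          push_cast
          nlinarith [mul_nonneg (t.length.cast_nonneg : (0 : ℝ) ≤ t.length) hX]

end ListProd

theorem HasDerivAt.clm_apply_eq_zero_of_forall_apply_eq {E F : Type*} [NormedAddCommGroup E]
    [NormedSpace ℝ E] [NormedAddCommGroup F] [NormedSpace ℝ F] {A : ℝ → E →L[ℝ] F}
    {A' : E →L[ℝ] F} {τ : ℝ} (hA : HasDerivAt A A' τ) {ω : E} (hω : ∀ s, A s ω = A τ ω) :
    A' ω = 0 := by
  have hconst : HasDerivAt (fun s ↦ A s ω) 0 τ := by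
    simpa [funext hω] using hasDerivAt_const τ (A τ ω)
  simpa using ((hA.clm_apply (hasDerivAt_const τ ω)).unique hconst)

theorem exists_tendsto_atBot_of_hasDerivAt_of_norm_le {E : Type*} [NormedAddCommGroup E]
    [NormedSpace ℝ E] [CompleteSpace E] {f : ℝ → E} {g : ℝ → ℝ} {a : ℝ}
    (hf : ∀ x ≤ a, ∃ f'x, HasDerivAt f f'x x ∧ ‖f'x‖ ≤ g x) (hg : IntegrableOn g (Iic a)) :
    ∃ y, Tendsto f atBot (𝓝 y) := by
  have hderiv : ∀ x ∈ Iic a, HasDerivAt f (deriv f x) x := fun x hx ↦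
    let ⟨_, hx', _⟩ := hf x hx
    hx'.differentiableAt.hasDerivAt
  have hint : IntegrableOn (deriv f) (Iic a) := by
    refine hg.mono' (aestronglyMeasurable_deriv f _) ?_
    filter_upwards [ae_restrict_mem measurableSet_Iic] with x hx
    obtain ⟨_, hx', hle⟩ := hf x hx
    rwa [hx'.deriv]
  exact ⟨_, tendsto_limUnder_of_hasDerivAt_of_integrableOn_Iic hderiv hint⟩

theorem stmt0_general
    {L : Type*} [NormedAddCommGroup L] [NormedSpace ℝ L] [CompleteSpace L]
    (ω : L) (n : ℕ) (Ls Ls' : Fin n → ℝ → (L →L[ℝ] L))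
    (hderiv : ∀ i τ, HasDerivAt (Ls i) (Ls' i τ) τ)
    (hconst : ∀ i τ τ', (Ls i τ) ω = (Ls i τ') ω)
    (M : ℝ) (hbound : ∀ i τ, ‖Ls i τ‖ ≤ M)
    (c : ℝ → ℝ)
    (hc_int : IntegrableOn c (Set.Iic (0 : ℝ)))
    (hcomm : ∀ i j τ, τ ≤ 0 →
      ‖Ls' i τ * Ls j τ - Ls j τ * Ls' i τ‖ ≤ c τ) :
    ∃ Λ : L, Tendsto (fun τ : ℝ => ((List.ofFn fun i => Ls i τ).prod) ω) atBot (nhds Λ) := by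
  set M' := max M 1
  simp only [List.ofFn_eq_map]
  refine exists_tendsto_atBot_of_hasDerivAt_of_norm_le (fun τ hτ ↦ ?_)
    (hc_int.const_mul (n ^ 2 * M' ^ n * ‖ω‖))
  obtain ⟨D, hD, hDle⟩ := exists_hasDerivAt_list_prod_apply_norm_le (le_max_right M 1)
    (fun i ↦ hderiv i τ)
    (fun i ↦ (hderiv i τ).clm_apply_eq_zero_of_forall_apply_eq fun s ↦ hconst i s τ)
    (fun i ↦ (hbound i τ).trans (le_max_left M 1)) (fun i j ↦ hcomm i j τ hτ)
    (List.finRange n)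
  refine ⟨D, hD, hDle.trans_eq ?_⟩
  rw [List.length_finRange]
  ring

/-- Convergence of Λ(τ) = L_1(τ)⋯L_n(τ)ω as τ → −∞ under a summable
commutator bound `‖[L_i'(τ), L_j(τ)]‖ ≤ c(τ)`. -/
theorem stmt0
    {L : Type*} [NormedAddCommGroup L] [NormedSpace ℝ L] [CompleteSpace L]
    (ω : L) (n : ℕ) (Ls Ls' : Fin n → ℝ → (L →L[ℝ] L))
    (hderiv : ∀ i τ, HasDerivAt (Ls i) (Ls' i τ) τ)
    (hcont : ∀ i, Continuous (Ls' i))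
    (hconst : ∀ i τ τ', (Ls i τ) ω = (Ls i τ') ω)
    (M : ℝ) (hbound : ∀ i τ, ‖Ls i τ‖ ≤ M)
    (c : ℝ → ℝ) (hc_nonneg : ∀ τ, 0 ≤ c τ)
    (hc_int : IntegrableOn c (Set.Iic (0 : ℝ)))
    (hcomm : ∀ i j τ, τ ≤ 0 →
      ‖Ls' i τ * Ls j τ - Ls j τ * Ls' i τ‖ ≤ c τ) :
    ∃ Λ : L, Tendsto (fun τ : ℝ => ((List.ofFn fun i => Ls i τ).prod) ω) atBot (nhds Λ) :=
  stmt0_general ω n Ls Ls' hderiv hconst M hbound c hc_int hcomm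
end

section
/- Let L be a Banach space, ω ∈ L, and for i = 1,…,n let τ ↦ L_i(τ) be maps from ℝ to bounded operators on L with M := sup_{i,τ} ‖L_i(τ)‖ < ∞ and with L_i(τ)ω independent of τ. Suppose that for all i, j, ‖[L_i(τ') − L_i(τ), L_j(τ)]‖ → 0 as τ, τ' → −∞ (with |τ'−τ| arbitrary). Then the net Λ(τ_1,…,τ_n) = L_1(τ_1) ⋯ L_n(τ_n) ω is Cauchy as all τ_j → −∞, hence the limit lim_{τ_1,…,τ_n → −∞} L_1(τ_1)⋯L_n(τ_n)ω exists. -/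
/-!
Write `A_i = L_i(τ_i)`, `A'_i = L_i(τ'_i)` and `D_i = A'_i - A_i`, so that `D_i ω = 0`. Peeling
off the first factor,
`A'_1⋯A'_n ω - A_1⋯A_n ω = A'_1 (A'_2⋯A'_n ω - A_2⋯A_n ω) + D_1 A_2⋯A_n ω`,
and `D_1` can be commuted through `A_2⋯A_n` onto `ω`, where it vanishes, at the cost of the
commutators `[D_1, A_j]`. By induction the difference is at most `n² M^n ‖ω‖ δ` when all these
commutators are bounded by `δ`, and they become small as soon as all `τ_j, τ'_j` are small:
`[L_i(τ'_i) - L_i(τ_i), L_j(τ_j)]` is the difference of two commutators of the hypothesis,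
both taken at `τ_j`. Completeness of `L` turns the Cauchy estimate into a limit.
-/

open Filter Topology

section Operators

variable {𝕜 E : Type*} [NontriviallyNormedField 𝕜] [NormedAddCommGroup E] [NormedSpace 𝕜 E]

theorem norm_list_prod_apply_le_s1 {M : ℝ} {l : List (E →L[𝕜] E)} (hl : ∀ A ∈ l, ‖A‖ ≤ M) (x : E) :
    ‖l.prod x‖ ≤ M ^ l.length * ‖x‖ := by
  induction l with
  | nil => simp
  | cons A l ih =>
    have hA : ‖A‖ ≤ M := hl A List.mem_cons_self
    calc ‖(A :: l).prod x‖ = ‖A (l.prod x)‖ := rfl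
      _ ≤ M * (M ^ l.length * ‖x‖) :=
        A.le_of_opNorm_le hA _ |>.trans <| mul_le_mul_of_nonneg_left
          (ih fun B hB => hl B (List.mem_cons_of_mem _ hB)) ((norm_nonneg A).trans hA)
      _ = M ^ (A :: l).length * ‖x‖ := by rw [List.length_cons, pow_succ]; ring

theorem norm_apply_list_prod_apply_le_of_apply_eq_zero {M δ : ℝ} (hM : 1 ≤ M)
    {D : E →L[𝕜] E} {x : E} (hDx : D x = 0) {l : List (E →L[𝕜] E)}
    (hl : ∀ A ∈ l, ‖A‖ ≤ M) (hD : ∀ A ∈ l, ‖⁅D, A⁆‖ ≤ δ) :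
    ‖D (l.prod x)‖ ≤ l.length * M ^ l.length * ‖x‖ * δ := by
  induction l with
  | nil => simpa using hDx
  | cons A l ih =>
    have hA : ‖A‖ ≤ M := hl A List.mem_cons_self
    have hDA : ‖⁅D, A⁆‖ ≤ δ := hD A List.mem_cons_self
    have ih := ih (fun B hB => hl B (List.mem_cons_of_mem _ hB))
      (fun B hB => hD B (List.mem_cons_of_mem _ hB))
    have hP := norm_list_prod_apply_le_s1 (fun B hB => hl B (List.mem_cons_of_mem _ hB)) x
    have hmove : D ((A :: l).prod x) = A (D (l.prod x)) + ⁅D, A⁆ (l.prod x) := by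
      simp [Ring.lie_def]
    have hc : 0 ≤ M ^ l.length * ‖x‖ * δ := by
      have := (norm_nonneg _).trans hDA
      positivity
    calc ‖D ((A :: l).prod x)‖
        ≤ M * (l.length * M ^ l.length * ‖x‖ * δ) + δ * (M ^ l.length * ‖x‖) := by
          rw [hmove]
          refine (norm_add_le _ _).trans (add_le_add ?_ ?_)
          · exact A.le_of_opNorm_le hA _ |>.trans (mul_le_mul_of_nonneg_left ih (by linarith))
          · exact ⁅D, A⁆.le_of_opNorm_le hDA _ |>.trans
              (mul_le_mul_of_nonneg_left hP ((norm_nonneg _).trans hDA))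
      _ = (l.length * M + 1) * (M ^ l.length * ‖x‖ * δ) := by ring
      _ ≤ (l.length * M + M) * (M ^ l.length * ‖x‖ * δ) := by gcongr
      _ = (A :: l).length * M ^ (A :: l).length * ‖x‖ * δ := by
          rw [List.length_cons, pow_succ]; push_cast; ring

theorem norm_ofFn_prod_apply_sub_le {n : ℕ} {M δ : ℝ} (hM : 1 ≤ M) {A A' : Fin n → E →L[𝕜] E}
    (hA : ∀ i, ‖A i‖ ≤ M) (hA' : ∀ i, ‖A' i‖ ≤ M) {x : E} (hx : ∀ i, A' i x = A i x)
    (hcomm : ∀ i j, ‖⁅A' i - A i, A j⁆‖ ≤ δ) :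
    ‖(List.ofFn A').prod x - (List.ofFn A).prod x‖ ≤ n ^ 2 * M ^ n * ‖x‖ * δ := by
  induction n with
  | zero => simp
  | succ m ih =>
    set P := (List.ofFn fun i : Fin m => A i.succ).prod
    set P' := (List.ofFn fun i : Fin m => A' i.succ).prod
    have htail : ‖P' x - P x‖ ≤ m ^ 2 * M ^ m * ‖x‖ * δ :=
      ih (fun i => hA i.succ) (fun i => hA' i.succ) (fun i => hx i.succ)
        (fun i j => hcomm i.succ j.succ)
    have hhead : ‖(A' 0 - A 0) (P x)‖ ≤ m * M ^ m * ‖x‖ * δ := by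
      simpa only [List.length_ofFn] using
        norm_apply_list_prod_apply_le_of_apply_eq_zero (l := List.ofFn fun i : Fin m => A i.succ)
          hM (by rw [sub_apply, hx, sub_self])
          (List.forall_mem_ofFn_iff.2 fun i => hA i.succ)
          (List.forall_mem_ofFn_iff.2 fun i => hcomm 0 i.succ)
    have hsplit : A' 0 (P' x) - A 0 (P x) = A' 0 (P' x - P x) + (A' 0 - A 0) (P x) := by
      simp only [map_sub, sub_apply]; abel
    have hc : 0 ≤ M ^ m * ‖x‖ * δ := by
      have := (norm_nonneg _).trans (hcomm 0 0)
      positivity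
    calc ‖(List.ofFn A').prod x - (List.ofFn A).prod x‖
        = ‖A' 0 (P' x - P x) + (A' 0 - A 0) (P x)‖ := by
          rw [List.ofFn_succ, List.ofFn_succ, List.prod_cons, List.prod_cons, ← hsplit]; rfl
      _ ≤ M * (m ^ 2 * M ^ m * ‖x‖ * δ) + m * M ^ m * ‖x‖ * δ :=
          (norm_add_le _ _).trans <| add_le_add
            ((A' 0).le_of_opNorm_le (hA' 0) _ |>.trans
              (mul_le_mul_of_nonneg_left htail (by linarith))) hhead
      _ = (m ^ 2 * M + m) * (M ^ m * ‖x‖ * δ) := by ring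
      _ ≤ (m ^ 2 * M + 2 * m * M + M) * (M ^ m * ‖x‖ * δ) :=
          mul_le_mul_of_nonneg_right (by nlinarith [mul_le_mul_of_nonneg_left hM m.cast_nonneg]) hc
      _ = ↑(m + 1) ^ 2 * M ^ (m + 1) * ‖x‖ * δ := by push_cast; ring

end Operators

theorem eventually_forall_norm_lie_sub_lt {R : Type*} [NormedRing R] {f g : ℝ → R}
    (h : Tendsto (fun p : ℝ × ℝ => ‖⁅f p.1 - f p.2, g p.2⁆‖) (atBot ×ˢ atBot) (𝓝 0))
    {ε : ℝ} (hε : 0 < ε) :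
    ∀ᶠ T in atBot, ∀ a ≤ T, ∀ b ≤ T, ∀ c ≤ T, ‖⁅f a - f b, g c⁆‖ < ε := by
  rw [prod_atBot_atBot_eq] at h
  obtain ⟨T, hT⟩ := eventually_atBot_prod_self'.1 (h.eventually (gt_mem_nhds (half_pos hε)))
  filter_upwards [eventually_le_atBot T] with T' hT' a ha b hb c hc
  have hsplit : ⁅f a - f b, g c⁆ = ⁅f a - f c, g c⁆ - ⁅f b - f c, g c⁆ := by
    simp only [Ring.lie_def]; noncomm_ring
  calc ‖⁅f a - f b, g c⁆‖ ≤ ‖⁅f a - f c, g c⁆‖ + ‖⁅f b - f c, g c⁆‖ := hsplit ▸ norm_sub_le _ _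
    _ < ε / 2 + ε / 2 :=
      add_lt_add (hT a (ha.trans hT') c (hc.trans hT')) (hT b (hb.trans hT') c (hc.trans hT'))
    _ = ε := add_halves ε

theorem exists_tendsto_pi_atBot_of_forall_dist_lt {ι X : Type*} [Finite ι] [PseudoMetricSpace X]
    [CompleteSpace X] {f : (ι → ℝ) → X}
    (h : ∀ ε > 0, ∃ T : ℝ, ∀ τ τ' : ι → ℝ, (∀ j, τ j ≤ T) → (∀ j, τ' j ≤ T) →
      dist (f τ') (f τ) < ε) :
    ∃ a, Tendsto f (Filter.pi fun _ => atBot) (𝓝 a) := by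
  rw [← cauchy_map_iff_exists_tendsto, Metric.cauchy_iff]
  refine ⟨map_neBot, fun ε hε => ?_⟩
  obtain ⟨T, hT⟩ := h ε hε
  refine ⟨f '' Set.univ.pi fun _ => Set.Iic T,
    image_mem_map (pi_mem_pi Set.finite_univ fun _ _ => Iic_mem_atBot T), ?_⟩
  rintro _ ⟨τ', hτ', rfl⟩ _ ⟨τ, hτ, rfl⟩
  exact hT τ τ' (fun j => hτ j trivial) (fun j => hτ' j trivial)

/-- If the commutators `[L_i(τ') − L_i(τ), L_j(τ)]` tend to zero in norm as
`τ, τ' → −∞`, then the net `Λ(τ_1,…,τ_n) = L_1(τ_1)⋯L_n(τ_n)ω` is Cauchy as all `τ_j → −∞`,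
hence it has a limit. -/
theorem stmt1
    {L : Type*} [NormedAddCommGroup L] [NormedSpace ℝ L] [CompleteSpace L]
    (ω : L) (n : ℕ) (Ls : Fin n → ℝ → (L →L[ℝ] L))
    (M : ℝ) (hbound : ∀ i τ, ‖Ls i τ‖ ≤ M)
    (hconst : ∀ i τ τ', (Ls i τ) ω = (Ls i τ') ω)
    (hcomm : ∀ i j, Tendsto
      (fun p : ℝ × ℝ =>
        ‖(Ls i p.1 - Ls i p.2) * Ls j p.2 - Ls j p.2 * (Ls i p.1 - Ls i p.2)‖)
      (atBot ×ˢ atBot) (nhds 0)) :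
    (∀ ε > (0 : ℝ), ∃ T : ℝ, ∀ τ τ' : Fin n → ℝ,
        (∀ j, τ j ≤ T) → (∀ j, τ' j ≤ T) →
        ‖((List.ofFn fun i => Ls i (τ' i)).prod) ω -
          ((List.ofFn fun i => Ls i (τ i)).prod) ω‖ < ε) ∧
    ∃ Λ : L, Tendsto (fun τ : Fin n → ℝ => ((List.ofFn fun i => Ls i (τ i)).prod) ω)
      (Filter.pi fun _ => atBot) (nhds Λ) := by
  have hbound' : ∀ i τ, ‖Ls i τ‖ ≤ max M 1 := fun i τ => (hbound i τ).trans (le_max_left M 1)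
  have hcauchy : ∀ ε > (0 : ℝ), ∃ T : ℝ, ∀ τ τ' : Fin n → ℝ,
      (∀ j, τ j ≤ T) → (∀ j, τ' j ≤ T) →
      ‖((List.ofFn fun i => Ls i (τ' i)).prod) ω -
        ((List.ofFn fun i => Ls i (τ i)).prod) ω‖ < ε := by
    intro ε hε
    obtain ⟨δ, hδ, hδε⟩ := exists_pos_mul_lt hε (n ^ 2 * max M 1 ^ n * ‖ω‖)
    have hsmall : ∀ᶠ T in atBot, ∀ i j, ∀ a ≤ T, ∀ b ≤ T, ∀ c ≤ T,
        ‖⁅Ls i a - Ls i b, Ls j c⁆‖ < δ := by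
      simp only [eventually_all]
      exact fun i j => eventually_forall_norm_lie_sub_lt
        (by simpa only [Ring.lie_def] using hcomm i j) hδ
    obtain ⟨T, hT⟩ := hsmall.exists
    refine ⟨T, fun τ τ' hτ hτ' => lt_of_le_of_lt ?_ hδε⟩
    exact norm_ofFn_prod_apply_sub_le (le_max_right M 1) (fun i => hbound' i _)
      (fun i => hbound' i _) (fun i => hconst i _ _)
      (fun i j => (hT i j _ (hτ' i) _ (hτ i) _ (hτ j)).le)
  exact ⟨hcauchy, exists_tendsto_pi_atBot_of_forall_dist_lt fun ε hε => by
    simpa only [dist_eq_norm] using hcauchy ε hε⟩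
end

section
/- Under the hypotheses of the previous setup (Banach space L, ω ∈ L, uniformly bounded operator families L_i(τ) with L_i(τ)ω constant), if for all i ≠ j one has ‖[L_i(τ), L_j(τ)]‖ → 0 as τ → −∞, and the limits Λ_π = lim_{τ→−∞} L_{π(1)}(τ)⋯L_{π(n)}(τ)ω exist for every permutation π of {1,…,n}, then all these limits are equal; i.e., the in-state is symmetric under permutation of the factors. -/
open Filter Topology Asymptotics

/-! As `τ → -∞`, a product of uniformly bounded factors is `O(1)`. A permutation of the
factors is a chain of adjacent transpositions, and each transposition changes the product by
`(prefix) * [L_a, L_b] * (suffix)`, which is `o(1)` since the commutator is. Applying the products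
to `ω`, the differences of the limits `Λ_π` are limits of `o(1)` quantities, hence vanish. -/

section ListProd

variable {ι α R : Type*} [NormedRing R] {l : Filter α} {f : ι → α → R}

theorem isBigO_one_list_prod (hf : ∀ i, f i =O[l] (fun _ => (1 : ℝ))) (s : List ι) :
    (fun x => (s.map (f · x)).prod) =O[l] (fun _ => (1 : ℝ)) := by
  induction s with
  | nil => simpa using isBigO_const_const (1 : R) (one_ne_zero : (1 : ℝ) ≠ 0) l
  | cons i s ih => simpa using (hf i).mul ih

theorem isLittleO_one_list_prod_sub_of_perm (hf : ∀ i, f i =O[l] (fun _ => (1 : ℝ)))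
    (hcomm : ∀ i j, i ≠ j → Tendsto (fun x => f i x * f j x - f j x * f i x) l (𝓝 0))
    {s t : List ι} (hst : s.Perm t) :
    (fun x => (s.map (f · x)).prod - (t.map (f · x)).prod) =o[l] (fun _ => (1 : ℝ)) := by
  induction hst with
  | nil => simpa using isLittleO_zero (E' := R) (fun _ => (1 : ℝ)) l
  | cons i _ ih => simpa [mul_sub] using (hf i).mul_isLittleO ih
  | swap i j s =>
    by_cases hij : j = i
    · subst hij
      simpa using isLittleO_zero (E' := R) (fun _ => (1 : ℝ)) l
    have hji := (isLittleO_one_iff ℝ).2 (hcomm j i hij)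
    simpa [sub_mul, mul_assoc] using hji.mul_isBigO (isBigO_one_list_prod hf s)
  | trans _ _ ih₁ ih₂ => simpa using ih₁.add ih₂

end ListProd

theorem stmt2_general
    {L : Type*} [NormedAddCommGroup L] [NormedSpace ℝ L]
    (ω : L) (n : ℕ) (Ls : Fin n → ℝ → (L →L[ℝ] L))
    (M : ℝ) (hbound : ∀ i τ, ‖Ls i τ‖ ≤ M)
    (hcomm : ∀ i j, i ≠ j → Tendsto
      (fun τ : ℝ => ‖Ls i τ * Ls j τ - Ls j τ * Ls i τ‖) atBot (nhds 0))
    (Λ : Equiv.Perm (Fin n) → L)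
    (hΛ : ∀ π : Equiv.Perm (Fin n),
      Tendsto (fun τ : ℝ => ((List.ofFn fun i => Ls (π i) τ).prod) ω) atBot (nhds (Λ π))) :
    ∀ π π' : Equiv.Perm (Fin n), Λ π = Λ π' := by
  intro π π'
  have hbigO : ∀ i, Ls i =O[atBot] (fun _ => (1 : ℝ)) := fun i =>
    IsBigO.of_bound M (Eventually.of_forall fun τ => by simpa using hbound i τ)
  have hperm : (List.ofFn π).Perm (List.ofFn π') :=
    (π.ofFn_comp_perm id).trans (π'.ofFn_comp_perm id).symm
  have hops := (isLittleO_one_iff ℝ).1 <| isLittleO_one_list_prod_sub_of_perm hbigO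
    (fun i j hij => tendsto_zero_iff_norm_tendsto_zero.2 (hcomm i j hij)) hperm
  have hdiff := ((ContinuousLinearMap.apply ℝ L ω).continuous.tendsto 0).comp hops
  simp only [map_zero] at hdiff
  have hprod : ∀ (σ : Equiv.Perm (Fin n)) τ,
      (List.ofFn fun i => Ls (σ i) τ) = (List.ofFn σ).map (Ls · τ) :=
    fun σ τ => by rw [List.map_ofFn]; rfl
  have hlim := (hΛ π).sub (hΛ π')
  simp only [hprod, ← sub_apply] at hlim
  exact sub_eq_zero.1 (tendsto_nhds_unique hlim hdiff)

/-- If `‖[L_i(τ), L_j(τ)]‖ → 0` as `τ → −∞` for `i ≠ j`, and for every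
permutation `π` the limit `Λ_π = lim_{τ→−∞} L_{π(1)}(τ)⋯L_{π(n)}(τ)ω` exists, then all these
limits coincide: the in-state is symmetric. -/
theorem stmt2
    {L : Type*} [NormedAddCommGroup L] [NormedSpace ℝ L] [CompleteSpace L]
    (ω : L) (n : ℕ) (Ls : Fin n → ℝ → (L →L[ℝ] L))
    (M : ℝ) (hbound : ∀ i τ, ‖Ls i τ‖ ≤ M)
    (hconst : ∀ i τ τ', (Ls i τ) ω = (Ls i τ') ω)
    (hcomm : ∀ i j, i ≠ j → Tendsto
      (fun τ : ℝ => ‖Ls i τ * Ls j τ - Ls j τ * Ls i τ‖) atBot (nhds 0))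
    (Λ : Equiv.Perm (Fin n) → L)
    (hΛ : ∀ π : Equiv.Perm (Fin n),
      Tendsto (fun τ : ℝ => ((List.ofFn fun i => Ls (π i) τ).prod) ω) atBot (nhds (Λ π))) :
    ∀ π π' : Equiv.Perm (Fin n), Λ π = Λ π' :=
  stmt2_general ω n Ls M hbound hcomm Λ hΛ
end

section
/- Let L be a Banach space, ω ∈ L, and let A, B : ℝ → B(L) be two uniformly bounded operator families with A(τ)ω = B(τ)ω for all τ (both constant in τ). Suppose L_2,…,L_n : ℝ → B(L) are uniformly bounded families with L_j(τ)ω constant, and that all pairwise commutators among {A(τ), B(τ), L_2(τ),…,L_n(τ)} tend to 0 in norm as τ → −∞. If both limits lim_{τ→−∞} A(τ)L_2(τ)⋯L_n(τ)ω and lim_{τ→−∞} B(τ)L_2(τ)⋯L_n(τ)ω exist, then they are equal. (The in-state does not depend on the choice of the operator realization.) -/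
open Filter Topology

section

variable {ι R : Type*} [SeminormedRing R] {l : Filter ι}

lemma Filter.IsBoundedUnder.norm_mul {f g : ι → R}
    (hf : IsBoundedUnder (· ≤ ·) l fun x => ‖f x‖) (hg : IsBoundedUnder (· ≤ ·) l fun x => ‖g x‖) :
    IsBoundedUnder (· ≤ ·) l fun x => ‖f x * g x‖ := by
  rw [← Asymptotics.isBigO_one_iff ℝ] at hf hg ⊢
  simpa using hf.mul hg

lemma isBoundedUnder_norm_prod_ofFn {n : ℕ} {f : Fin n → ι → R}
    (hf : ∀ j, IsBoundedUnder (· ≤ ·) l fun x => ‖f j x‖) :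
    IsBoundedUnder (· ≤ ·) l fun x => ‖(List.ofFn fun j => f j x).prod‖ := by
  induction n with
  | zero => simpa using isBoundedUnder_const
  | succ n ih =>
    simp only [List.ofFn_succ, List.prod_cons]
    exact (hf 0).norm_mul (ih fun j => hf j.succ)

lemma tendsto_commutator_prod_ofFn {n : ℕ} {X : ι → R} {f : Fin n → ι → R}
    (hf : ∀ j, IsBoundedUnder (· ≤ ·) l fun x => ‖f j x‖)
    (hX : ∀ j, Tendsto (fun x => X x * f j x - f j x * X x) l (𝓝 0)) :
    Tendsto (fun x => X x * (List.ofFn fun j => f j x).prod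
      - (List.ofFn fun j => f j x).prod * X x) l (𝓝 0) := by
  induction n with
  | zero => simpa using tendsto_const_nhds
  | succ n ih =>
    have hP := isBoundedUnder_norm_prod_ofFn fun j => hf j.succ
    have hXP := ih (fun j => hf j.succ) fun j => hX j.succ
    have leibniz : ∀ a b c : R,
        c * (a * b) - a * b * c = (c * a - a * c) * b + a * (c * b - b * c) := by
      intro a b c; noncomm_ring
    simp only [List.ofFn_succ, List.prod_cons, leibniz]
    simpa using ((hX 0).zero_mul_isBoundedUnder_le hP).add
      (isBoundedUnder_le_mul_tendsto_zero (hf 0) hXP)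

end

theorem stmt3_general
    {L : Type*} [NormedAddCommGroup L] [NormedSpace ℝ L]
    (ω : L) (n : ℕ) (A B : ℝ → (L →L[ℝ] L)) (Ls : Fin n → ℝ → (L →L[ℝ] L))
    (M : ℝ)
    (hbound : ∀ j τ, ‖Ls j τ‖ ≤ M)
    (hAB : ∀ τ, A τ ω = B τ ω)
    (hcommA : ∀ j, Tendsto (fun τ : ℝ => ‖A τ * Ls j τ - Ls j τ * A τ‖) atBot (nhds 0))
    (hcommB : ∀ j, Tendsto (fun τ : ℝ => ‖B τ * Ls j τ - Ls j τ * B τ‖) atBot (nhds 0))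
    (ΛA ΛB : L)
    (hΛA : Tendsto (fun τ : ℝ => (A τ * (List.ofFn fun j => Ls j τ).prod) ω) atBot (nhds ΛA))
    (hΛB : Tendsto (fun τ : ℝ => (B τ * (List.ofFn fun j => Ls j τ).prod) ω) atBot (nhds ΛB)) :
    ΛA = ΛB := by
  have hLs : ∀ j, IsBoundedUnder (· ≤ ·) atBot fun τ => ‖Ls j τ‖ :=
    fun j => isBoundedUnder_of ⟨M, hbound j⟩
  have hA := tendsto_commutator_prod_ofFn hLs fun j =>
    tendsto_zero_iff_norm_tendsto_zero.2 (hcommA j)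
  have hB := tendsto_commutator_prod_ofFn hLs fun j =>
    tendsto_zero_iff_norm_tendsto_zero.2 (hcommB j)
  set P := fun τ => (List.ofFn fun j => Ls j τ).prod
  -- `P A ω = P B ω`, so the two vectors differ by `([A, P] - [B, P]) ω`.
  have hdiff : ∀ τ, ((A τ * P τ - P τ * A τ) - (B τ * P τ - P τ * B τ)) ω
      = (A τ * P τ) ω - (B τ * P τ) ω := by
    intro τ
    simp [hAB]
  have hlim : Tendsto (fun τ => (A τ * P τ) ω - (B τ * P τ) ω) atBot (𝓝 0) :=
    (tendsto_congr hdiff).1 <|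
      ((ContinuousLinearMap.apply ℝ L ω).continuous.tendsto' _ 0 (by simp)).comp (hA.sub hB)
  exact sub_eq_zero.1 (tendsto_nhds_unique (hΛA.sub hΛB) hlim)

/-- Independence of the in-state of the choice of the operator realization:
if `A(τ)ω = B(τ)ω` and all pairwise commutators among `{A, B, L_2, …, L_n}` tend to `0`
as `τ → −∞`, then the two limits coincide. -/
theorem stmt3
    {L : Type*} [NormedAddCommGroup L] [NormedSpace ℝ L] [CompleteSpace L]
    (ω : L) (n : ℕ) (A B : ℝ → (L →L[ℝ] L)) (Ls : Fin n → ℝ → (L →L[ℝ] L))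
    (M : ℝ) (hboundA : ∀ τ, ‖A τ‖ ≤ M) (hboundB : ∀ τ, ‖B τ‖ ≤ M)
    (hbound : ∀ j τ, ‖Ls j τ‖ ≤ M)
    (hAB : ∀ τ, A τ ω = B τ ω)
    (hAconst : ∀ τ τ', A τ ω = A τ' ω)
    (hconst : ∀ j τ τ', Ls j τ ω = Ls j τ' ω)
    (hcommAB : Tendsto (fun τ : ℝ => ‖A τ * B τ - B τ * A τ‖) atBot (nhds 0))
    (hcommA : ∀ j, Tendsto (fun τ : ℝ => ‖A τ * Ls j τ - Ls j τ * A τ‖) atBot (nhds 0))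
    (hcommB : ∀ j, Tendsto (fun τ : ℝ => ‖B τ * Ls j τ - Ls j τ * B τ‖) atBot (nhds 0))
    (hcommL : ∀ i j, i ≠ j →
      Tendsto (fun τ : ℝ => ‖Ls i τ * Ls j τ - Ls j τ * Ls i τ‖) atBot (nhds 0))
    (ΛA ΛB : L)
    (hΛA : Tendsto (fun τ : ℝ => (A τ * (List.ofFn fun j => Ls j τ).prod) ω) atBot (nhds ΛA))
    (hΛB : Tendsto (fun τ : ℝ => (B τ * (List.ofFn fun j => Ls j τ).prod) ω) atBot (nhds ΛB)) :
    ΛA = ΛB :=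
  stmt3_general ω n A B Ls M hbound hAB hcommA hcommB ΛA ΛB hΛA hΛB
end

section
/- Let H be a Hilbert space, θ ∈ H, and {B_j(τ)}_{j=1,…,n}, {B'_j(τ)}_{j=1,…,n} two families of uniformly bounded operators with B_j(τ)θ = B'_j(τ)θ =: ψ_j independent of τ, such that ‖[B_i^{#}(τ), B_j^{#}(τ')]‖ → 0 as τ, τ' → −∞ for all choices of # ∈ {unprimed, primed} and i ≠ j. If the limits Ψ = lim_{τ→−∞} B_1(τ)⋯B_n(τ)θ and Ψ' = lim_{τ→−∞} B'_1(τ)⋯B'_n(τ)θ both exist, then Ψ = Ψ'. -/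
/-!
Write `P(τ) = B_1(τ)⋯B_n(τ)` and `P'(τ) = B'_1(τ)⋯B'_n(τ)`. Peeling off the first factor,
`P θ - P' θ = B_1 (B_2⋯B_n θ - B'_2⋯B'_n θ) + (B_1 - B'_1) B'_2⋯B'_n θ`, so by induction it
suffices that `D = B_1 - B'_1` sends `B'_2⋯B'_n θ` to `0`. Since `D θ = 0`, commuting `D` through
the product leaves only terms containing a commutator `[D, B'_k]`, which vanish asymptotically
while all other factors stay bounded. Hence `P θ - P' θ → 0`, and the two limits agree.
-/

open Filter Topology

namespace ContinuousLinearMap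

variable {𝕜 E : Type*} [NontriviallyNormedField 𝕜] [SeminormedAddCommGroup E] [NormedSpace 𝕜 E]

theorem norm_list_prod_apply_le {K : ℝ} (x : E) :
    ∀ l : List (E →L[𝕜] E), (∀ C ∈ l, ‖C‖ ≤ K) → ‖l.prod x‖ ≤ K ^ l.length * ‖x‖
  | [], _ => by simp
  | C :: t, h => by
    have hC : ‖C‖ ≤ K := h C List.mem_cons_self
    have ht := norm_list_prod_apply_le x t fun D hD => h D (List.mem_cons_of_mem C hD)
    calc ‖(C :: t).prod x‖ ≤ ‖C‖ * ‖t.prod x‖ := C.le_opNorm _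
      _ ≤ K * (K ^ t.length * ‖x‖) :=
          mul_le_mul hC ht (norm_nonneg _) ((norm_nonneg C).trans hC)
      _ = K ^ (C :: t).length * ‖x‖ := by rw [List.length_cons, pow_succ]; ring

variable {ι T : Type*} {L : Filter T}

theorem tendsto_apply_zero_of_norm_le {F : Type*} [SeminormedAddCommGroup F] [NormedSpace 𝕜 F]
    {A : T → E →L[𝕜] F} {v : T → E} {K : ℝ} (hA : ∀ τ, ‖A τ‖ ≤ K) (hv : Tendsto v L (𝓝 0)) :
    Tendsto (fun τ => A τ (v τ)) L (𝓝 0) :=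
  squeeze_zero_norm
    (fun τ => ((A τ).le_opNorm _).trans (mul_le_mul_of_nonneg_right (hA τ) (norm_nonneg _)))
    (by simpa using (tendsto_zero_iff_norm_tendsto_zero.mp hv).const_mul K)

theorem tendsto_apply_list_prod_of_commutator {D : T → E →L[𝕜] E} {C : ι → T → E →L[𝕜] E}
    {K : ℝ} {x : E} (hDx : ∀ τ, D τ x = 0) (hC : ∀ i τ, ‖C i τ‖ ≤ K) :
    ∀ l : List ι, (∀ i ∈ l, Tendsto (fun τ => ‖D τ * C i τ - C i τ * D τ‖) L (𝓝 0)) →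
      Tendsto (fun τ => D τ ((l.map fun i => C i τ).prod x)) L (𝓝 0)
  | [], _ => by simpa [hDx] using tendsto_const_nhds
  | i :: t, h => by
    have hcomm := h i List.mem_cons_self
    have ht := tendsto_apply_list_prod_of_commutator hDx hC t
      fun k hk => h k (List.mem_cons_of_mem i hk)
    have hsplit : ∀ τ, D τ (((i :: t).map fun k => C k τ).prod x) =
        (D τ * C i τ - C i τ * D τ) ((t.map fun k => C k τ).prod x) +
          C i τ (D τ ((t.map fun k => C k τ).prod x)) := by
      intro τ
      simp only [List.map_cons, List.prod_cons, mul_apply_eq_comp, _root_.sub_apply, sub_add_cancel]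
    have hrest : ∀ τ, ‖(t.map fun k => C k τ).prod x‖ ≤ K ^ t.length * ‖x‖ := fun τ => by
      simpa using norm_list_prod_apply_le x (t.map fun k => C k τ) (by simp [hC])
    have hfirst : Tendsto (fun τ => (D τ * C i τ - C i τ * D τ) ((t.map fun k => C k τ).prod x))
        L (𝓝 0) :=
      squeeze_zero_norm (fun τ => ((D τ * C i τ - C i τ * D τ).le_opNorm _).trans
          (mul_le_mul_of_nonneg_left (hrest τ) (norm_nonneg _)))
        (by simpa using hcomm.mul_const (K ^ t.length * ‖x‖))
    simpa only [hsplit, add_zero] using hfirst.add (tendsto_apply_zero_of_norm_le (hC i) ht)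

theorem tendsto_list_prod_apply_sub_list_prod_apply {B B' : ι → T → E →L[𝕜] E} {M : ℝ}
    {x : E} (hboundB : ∀ j τ, ‖B j τ‖ ≤ M) (hboundB' : ∀ j τ, ‖B' j τ‖ ≤ M)
    (hBx : ∀ j τ, B j τ x = B' j τ x)
    (hcommB : ∀ i j, i ≠ j → Tendsto (fun τ => ‖B i τ * B' j τ - B' j τ * B i τ‖) L (𝓝 0))
    (hcommB' : ∀ i j, i ≠ j → Tendsto (fun τ => ‖B' i τ * B' j τ - B' j τ * B' i τ‖) L (𝓝 0)) :
    ∀ l : List ι, l.Nodup →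
      Tendsto (fun τ => (l.map fun j => B j τ).prod x - (l.map fun j => B' j τ).prod x)
        L (𝓝 0)
  | [], _ => by simpa using tendsto_const_nhds
  | j :: t, hl => by
    obtain ⟨hjt, ht⟩ := List.nodup_cons.mp hl
    have hsplit : ∀ τ, ((j :: t).map fun k => B k τ).prod x - ((j :: t).map fun k => B' k τ).prod x
        = B j τ ((t.map fun k => B k τ).prod x - (t.map fun k => B' k τ).prod x)
          + (B j τ - B' j τ) ((t.map fun k => B' k τ).prod x) := by
      intro τ
      simp only [List.map_cons, List.prod_cons, mul_apply_eq_comp, _root_.sub_apply, map_sub]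
      abel
    have ih := tendsto_list_prod_apply_sub_list_prod_apply hboundB hboundB' hBx hcommB
      hcommB' t ht
    have hcommD : ∀ k ∈ t, Tendsto
        (fun τ => ‖(B j τ - B' j τ) * B' k τ - B' k τ * (B j τ - B' j τ)‖) L (𝓝 0) := by
      intro k hk
      have hjk : j ≠ k := fun h => hjt (h ▸ hk)
      refine squeeze_zero (fun τ => norm_nonneg _) (fun τ => ?_)
        (by simpa using (hcommB j k hjk).add (hcommB' j k hjk))
      rw [show (B j τ - B' j τ) * B' k τ - B' k τ * (B j τ - B' j τ)
          = (B j τ * B' k τ - B' k τ * B j τ) - (B' j τ * B' k τ - B' k τ * B' j τ) by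
        noncomm_ring]
      exact norm_sub_le _ _
    have hsecond := tendsto_apply_list_prod_of_commutator (D := fun τ => B j τ - B' j τ)
      (fun τ => by rw [_root_.sub_apply, hBx, sub_self]) hboundB' t hcommD
    simpa only [hsplit, add_zero] using (tendsto_apply_zero_of_norm_le (hboundB j) ih).add hsecond

end ContinuousLinearMap

theorem stmt10_general
    {H : Type*} [NormedAddCommGroup H] [InnerProductSpace ℂ H]
    (θ : H) (n : ℕ) (B B' : Fin n → ℝ → (H →L[ℂ] H)) (ψ : Fin n → H)
    (M : ℝ) (hboundB : ∀ j τ, ‖B j τ‖ ≤ M) (hboundB' : ∀ j τ, ‖B' j τ‖ ≤ M)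
    (hB : ∀ j τ, B j τ θ = ψ j) (hB' : ∀ j τ, B' j τ θ = ψ j)
    (hcomm : ∀ i j, i ≠ j → ∀ F G : Fin n → ℝ → (H →L[ℂ] H),
      (F = B ∨ F = B') → (G = B ∨ G = B') →
      Tendsto (fun p : ℝ × ℝ => ‖F i p.1 * G j p.2 - G j p.2 * F i p.1‖)
        (atBot ×ˢ atBot) (nhds 0))
    (Ψ Ψ' : H)
    (hΨ : Tendsto (fun τ : ℝ => ((List.ofFn fun j => B j τ).prod) θ) atBot (nhds Ψ))
    (hΨ' : Tendsto (fun τ : ℝ => ((List.ofFn fun j => B' j τ).prod) θ) atBot (nhds Ψ')) :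
    Ψ = Ψ' := by
  have hcommB : ∀ i j : Fin n, i ≠ j →
      Tendsto (fun τ : ℝ => ‖B i τ * B' j τ - B' j τ * B i τ‖) atBot (𝓝 0) := fun i j hij =>
    ((hcomm i j hij B B' (.inl rfl) (.inr rfl)).comp tendsto_diag :)
  have hcommB' : ∀ i j : Fin n, i ≠ j →
      Tendsto (fun τ : ℝ => ‖B' i τ * B' j τ - B' j τ * B' i τ‖) atBot (𝓝 0) := fun i j hij =>
    ((hcomm i j hij B' B' (.inr rfl) (.inr rfl)).comp tendsto_diag :)
  have hdiff := ContinuousLinearMap.tendsto_list_prod_apply_sub_list_prod_apply hboundB hboundB'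
    (fun j τ => (hB j τ).trans (hB' j τ).symm) hcommB hcommB'
    (List.finRange n) (List.nodup_finRange n)
  simp only [← List.ofFn_eq_map] at hdiff
  exact sub_eq_zero.mp (tendsto_nhds_unique (hΨ.sub hΨ') hdiff)

/-- If two families of operator realizations `B_j`, `B'_j` produce the same
one-particle vectors `ψ_j = B_j(τ)θ = B'_j(τ)θ` and all mixed commutators of distinct factors
vanish in norm as the times tend to `−∞`, then the corresponding in-state vectors coincide. -/
theorem stmt10
    {H : Type*} [NormedAddCommGroup H] [InnerProductSpace ℂ H] [CompleteSpace H]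
    (θ : H) (n : ℕ) (B B' : Fin n → ℝ → (H →L[ℂ] H)) (ψ : Fin n → H)
    (M : ℝ) (hboundB : ∀ j τ, ‖B j τ‖ ≤ M) (hboundB' : ∀ j τ, ‖B' j τ‖ ≤ M)
    (hB : ∀ j τ, B j τ θ = ψ j) (hB' : ∀ j τ, B' j τ θ = ψ j)
    (hcomm : ∀ i j, i ≠ j → ∀ F G : Fin n → ℝ → (H →L[ℂ] H),
      (F = B ∨ F = B') → (G = B ∨ G = B') →
      Tendsto (fun p : ℝ × ℝ => ‖F i p.1 * G j p.2 - G j p.2 * F i p.1‖)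
        (atBot ×ˢ atBot) (nhds 0))
    (Ψ Ψ' : H)
    (hΨ : Tendsto (fun τ : ℝ => ((List.ofFn fun j => B j τ).prod) θ) atBot (nhds Ψ))
    (hΨ' : Tendsto (fun τ : ℝ => ((List.ofFn fun j => B' j τ).prod) θ) atBot (nhds Ψ')) :
    Ψ = Ψ' :=
  stmt10_general θ n B B' ψ M hboundB hboundB' hB hB' hcomm Ψ Ψ' hΨ hΨ'
end

section
/- Let L be a Banach space with vectors ω ∈ L and α ∈ L* (the dual), and let L_j(τ) (j=1,…,n) and L'_k(τ') (k=1,…,m) be uniformly bounded operator families on L with: L_j(τ)ω independent of τ, (L'_k(τ'))^* α independent of τ', pairwise commutators ‖[L_i(τ), L_j(σ)]‖ → 0 as τ, σ → −∞, and ‖[L'_k(τ'), L'_l(σ')]‖ → 0 as τ', σ' → +∞. Assume the limit Λ = lim_{τ_j → −∞} L_1(τ_1)⋯L_n(τ_n)ω exists and the limit of ⟨α, L'_1(τ'_1)⋯L'_m(τ'_m) Λ⟩ as all τ'_k → +∞ exists. Then this limit is invariant under any permutation of the factors L_1,…,L_n and under any permutation of the factors L'_1,…,L'_m. -/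
/-!
Swapping two adjacent factors of a product changes it by a commutator times a bounded product,
which tends to zero. Since every permutation is a composition of adjacent swaps, the permuted
product of operators differs from the unpermuted one, taken at correspondingly relabelled times,
by an operator tending to zero in norm. Relabelling the times preserves the product filter, so
the limits `Λ` and `S` survive the permutation unchanged.
-/

open Filter Asymptotics Topology

section AsymptoticCommutation

variable {α R : Type*} [SeminormedRing R] {F : Filter α}

theorem isLittleO_one_listProd_sub_of_perm {l₁ l₂ : List (α → R)} (hp : l₁.Perm l₂)
    (hbound : ∀ f ∈ l₁, f =O[F] fun _ => (1 : ℝ))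
    (hcomm : ∀ f ∈ l₁, ∀ g ∈ l₁,
      (fun t => f t * g t - g t * f t) =o[F] fun _ => (1 : ℝ)) :
    (fun t => (l₁.map (· t)).prod - (l₂.map (· t)).prod) =o[F] fun _ => (1 : ℝ) := by
  induction hp with
  | nil => simpa using isLittleO_zero (E' := R) (fun _ => (1 : ℝ)) F
  | cons f _ ih =>
    simp only [List.mem_cons, forall_eq_or_imp] at hbound hcomm
    have := hbound.1.mul_isLittleO (ih hbound.2 fun g hg h hh => (hcomm.2 g hg).2 h hh)
    simpa [mul_sub] using this
  | swap x y l =>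
    have hP : (fun t => (l.map (· t)).prod) =O[F] fun _ => (1 : ℝ) := by
      simpa using IsBigO.listProd (f := fun g : α → R => g) (g := fun _ _ => (1 : ℝ))
        fun g hg => hbound g (by simp [hg])
    have := (hcomm y (by simp) x (by simp)).mul_isBigO hP
    simpa [sub_mul, mul_assoc] using this
  | @trans _ l₂ _ h₁₂ _ ih₁₂ ih₂₃ =>
    have hbound₂ : ∀ f ∈ l₂, f =O[F] fun _ => (1 : ℝ) :=
      fun f hf => hbound f (h₁₂.mem_iff.2 hf)
    have hcomm₂ : ∀ f ∈ l₂, ∀ g ∈ l₂,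
        (fun t => f t * g t - g t * f t) =o[F] fun _ => (1 : ℝ) :=
      fun f hf g hg => hcomm f (h₁₂.mem_iff.2 hf) g (h₁₂.mem_iff.2 hg)
    simpa using (ih₁₂ hbound hcomm).add (ih₂₃ hbound₂ hcomm₂)

theorem tendsto_ofFn_prod_comp_perm_sub {n : ℕ} (f : Fin n → α → R) (π : Equiv.Perm (Fin n))
    (hbound : ∀ i, f i =O[F] fun _ => (1 : ℝ))
    (hcomm : ∀ i j, (fun t => f i t * f j t - f j t * f i t) =o[F] fun _ => (1 : ℝ)) :
    Tendsto (fun t => (List.ofFn fun j => f (π j) t).prod - (List.ofFn fun j => f j t).prod)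
      F (𝓝 0) := by
  have := isLittleO_one_listProd_sub_of_perm (π.ofFn_comp_perm f)
    (by simpa using fun i => hbound (π i))
    (by simpa using fun i j => hcomm (π i) (π j))
  simpa [List.map_ofFn, Function.comp_def] using (isLittleO_one_iff ℝ).1 this

theorem tendsto_ofFn_prod_perm_sub {n : ℕ} {Ls : Fin n → α → R} {M : ℝ}
    (hbound : ∀ j τ, ‖Ls j τ‖ ≤ M)
    (hcomm : ∀ i j, Tendsto (fun p : α × α => ‖Ls i p.1 * Ls j p.2 - Ls j p.2 * Ls i p.1‖)
      (F ×ˢ F) (𝓝 0))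
    (π : Equiv.Perm (Fin n)) :
    Tendsto (fun τ : Fin n → α => (List.ofFn fun j => Ls (π j) (τ j)).prod
      - (List.ofFn fun j => Ls j (τ (π⁻¹ j))).prod) (Filter.pi fun _ => F) (𝓝 0) := by
  have hpair (i j : Fin n) : Tendsto (fun τ : Fin n → α => (τ i, τ j))
      (Filter.pi fun _ => F) (F ×ˢ F) :=
    (tendsto_eval_pi _ i).prodMk (tendsto_eval_pi _ j)
  have := tendsto_ofFn_prod_comp_perm_sub (fun i (τ : Fin n → α) => Ls i (τ (π⁻¹ i))) π
    (fun i => isBigO_of_le' (c := M) _ fun τ => by simpa using hbound i _)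
    (fun i j => (isLittleO_one_iff ℝ).2 <| tendsto_zero_iff_norm_tendsto_zero.2 <|
      (hcomm i j).comp (hpair (π⁻¹ i) (π⁻¹ j)))
  simpa using this

end AsymptoticCommutation

theorem ContinuousLinearMap.tendsto_of_tendsto_sub {S X Y ι : Type*} [Semiring S]
    [TopologicalSpace X] [AddCommGroup X] [Module S X]
    [TopologicalSpace Y] [AddCommGroup Y] [Module S Y] [ContinuousAdd Y]
    (Φ : X →L[S] Y) {A B : ι → X} {F : Filter ι} {y : Y}
    (hB : Tendsto (fun t => Φ (B t)) F (𝓝 y)) (hAB : Tendsto (fun t => A t - B t) F (𝓝 0)) :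
    Tendsto (fun t => Φ (A t)) F (𝓝 y) := by
  have := hB.add ((map_zero Φ ▸ Φ.continuous.tendsto 0).comp hAB)
  simpa using this

theorem tendsto_comp_pi {ι κ β : Type*} (σ : κ → ι) (F : Filter β) :
    Tendsto (fun τ : ι → β => τ ∘ σ) (Filter.pi fun _ => F) (Filter.pi fun _ => F) :=
  tendsto_pi.2 fun k => tendsto_eval_pi _ (σ k)

theorem stmt11_general
    {L : Type*} [NormedAddCommGroup L] [NormedSpace ℝ L]
    (ω : L) (α : L →L[ℝ] ℝ) (n m : ℕ)
    (Ls : Fin n → ℝ → (L →L[ℝ] L)) (Ls' : Fin m → ℝ → (L →L[ℝ] L))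
    (M : ℝ) (hbound : ∀ j τ, ‖Ls j τ‖ ≤ M) (hbound' : ∀ k τ, ‖Ls' k τ‖ ≤ M)
    (hcomm : ∀ i j, Tendsto
      (fun p : ℝ × ℝ => ‖Ls i p.1 * Ls j p.2 - Ls j p.2 * Ls i p.1‖)
      (atBot ×ˢ atBot) (nhds 0))
    (hcomm' : ∀ k l, Tendsto
      (fun p : ℝ × ℝ => ‖Ls' k p.1 * Ls' l p.2 - Ls' l p.2 * Ls' k p.1‖)
      (atTop ×ˢ atTop) (nhds 0))
    (Λ : L)
    (hΛ : Tendsto (fun τ : Fin n → ℝ => ((List.ofFn fun j => Ls j (τ j)).prod) ω)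
      (Filter.pi fun _ => atBot) (nhds Λ))
    (S : ℝ)
    (hS : Tendsto (fun τ' : Fin m → ℝ => α (((List.ofFn fun k => Ls' k (τ' k)).prod) Λ))
      (Filter.pi fun _ => atTop) (nhds S)) :
    ∀ (πn : Equiv.Perm (Fin n)) (πm : Equiv.Perm (Fin m)),
      ∃ Λπ : L,
        Tendsto (fun τ : Fin n → ℝ => ((List.ofFn fun j => Ls (πn j) (τ j)).prod) ω)
          (Filter.pi fun _ => atBot) (nhds Λπ) ∧
        Tendsto (fun τ' : Fin m → ℝ =>
            α (((List.ofFn fun k => Ls' (πm k) (τ' k)).prod) Λπ))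
          (Filter.pi fun _ => atTop) (nhds S) := by
  intro πn πm
  refine ⟨Λ, ?_, ?_⟩
  · refine (ContinuousLinearMap.apply ℝ L ω).tendsto_of_tendsto_sub ?_
      (tendsto_ofFn_prod_perm_sub hbound hcomm πn)
    simpa [Function.comp_def] using hΛ.comp (tendsto_comp_pi ⇑πn⁻¹ atBot)
  · refine (α.comp (ContinuousLinearMap.apply ℝ L Λ)).tendsto_of_tendsto_sub ?_
      (tendsto_ofFn_prod_perm_sub hbound' hcomm' πm)
    simpa [Function.comp_def] using hS.comp (tendsto_comp_pi ⇑πm⁻¹ atTop)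

/-- Symmetry of the inclusive scattering matrix: the limit
`lim ⟨α, L'_1(τ'_1)⋯L'_m(τ'_m) L_1(τ_1)⋯L_n(τ_n) ω⟩` (first all `τ_j → −∞`, then all
`τ'_k → +∞`) is invariant under permutations of the `L_j` and of the `L'_k`. -/
theorem stmt11
    {L : Type*} [NormedAddCommGroup L] [NormedSpace ℝ L] [CompleteSpace L]
    (ω : L) (α : L →L[ℝ] ℝ) (n m : ℕ)
    (Ls : Fin n → ℝ → (L →L[ℝ] L)) (Ls' : Fin m → ℝ → (L →L[ℝ] L))
    (M : ℝ) (hbound : ∀ j τ, ‖Ls j τ‖ ≤ M) (hbound' : ∀ k τ, ‖Ls' k τ‖ ≤ M)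
    (hconst : ∀ j τ τ', Ls j τ ω = Ls j τ' ω)
    (hconst' : ∀ k τ τ', α.comp (Ls' k τ) = α.comp (Ls' k τ'))
    (hcomm : ∀ i j, Tendsto
      (fun p : ℝ × ℝ => ‖Ls i p.1 * Ls j p.2 - Ls j p.2 * Ls i p.1‖)
      (atBot ×ˢ atBot) (nhds 0))
    (hcomm' : ∀ k l, Tendsto
      (fun p : ℝ × ℝ => ‖Ls' k p.1 * Ls' l p.2 - Ls' l p.2 * Ls' k p.1‖)
      (atTop ×ˢ atTop) (nhds 0))
    (Λ : L)
    (hΛ : Tendsto (fun τ : Fin n → ℝ => ((List.ofFn fun j => Ls j (τ j)).prod) ω)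
      (Filter.pi fun _ => atBot) (nhds Λ))
    (S : ℝ)
    (hS : Tendsto (fun τ' : Fin m → ℝ => α (((List.ofFn fun k => Ls' k (τ' k)).prod) Λ))
      (Filter.pi fun _ => atTop) (nhds S)) :
    ∀ (πn : Equiv.Perm (Fin n)) (πm : Equiv.Perm (Fin m)),
      ∃ Λπ : L,
        Tendsto (fun τ : Fin n → ℝ => ((List.ofFn fun j => Ls (πn j) (τ j)).prod) ω)
          (Filter.pi fun _ => atBot) (nhds Λπ) ∧
        Tendsto (fun τ' : Fin m → ℝ =>
            α (((List.ofFn fun k => Ls' (πm k) (τ' k)).prod) Λπ))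
          (Filter.pi fun _ => atTop) (nhds S) :=
  stmt11_general ω α n m Ls Ls' M hbound hbound' hcomm hcomm' Λ hΛ S hS
end
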